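/- arXiv:1911.04755 — 9 statements merged into one kernel-verified Lean document; each statement's English description precedes it below -/
import Mathlib

section
/- For every natural number n, the number of partitions of n into parts not divisible by m equals the number of partitions of n in which every part appears fewer than m times, for any integer m ≥ 2. -/
/-- A partition is `m`-regular if no part is divisible by `m`. -/
def Nat.Partition.IsRegular {n : ℕ} (m : ℕ) (P : n.Partition) : Prop :=
  ∀ a ∈ P.parts, ¬ m ∣ a

/-- A partition is `m`-distinct if every part appears fewer than `m` times. -/
def Nat.Partition.IsDistinct {n : ℕ} (m : ℕ) (P : n.Partition) : Prop :=
  ∀ a, P.parts.count a < m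

/-!
Both counts are coefficients of the same power series:
$\prod_{m \nmid i} (1 - X^i)^{-1} = \prod_{i \ge 1} (1 - X^{mi}) / (1 - X^i)
= \prod_{i \ge 1} (1 + X^i + \dots + X^{(m-1)i})$,
which is Mathlib's `Nat.Partition.card_restricted_eq_card_countRestricted`.
-/

namespace Nat.Partition

open Finset

theorem isRegular_iff_mem_restricted {m n : ℕ} (P : n.Partition) :
    P.IsRegular m ↔ P ∈ restricted n (¬ m ∣ ·) := by
  simp [IsRegular, restricted]

theorem isDistinct_iff_mem_countRestricted {m n : ℕ} (hm : 0 < m) (P : n.Partition) :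
    P.IsDistinct m ↔ P ∈ countRestricted n m := by
  simp only [countRestricted, mem_filter, mem_univ, true_and]
  refine ⟨fun h a _ ↦ h a, fun h a ↦ ?_⟩
  by_cases ha : a ∈ P.parts
  · exact h a ha
  · rwa [Multiset.count_eq_zero_of_notMem ha]

theorem card_isRegular_eq_card_restricted (m n : ℕ) :
    Nat.card {P : n.Partition // P.IsRegular m} = #(restricted n (¬ m ∣ ·)) :=
  (Nat.card_congr (Equiv.subtypeEquivRight isRegular_iff_mem_restricted)).trans
    (Nat.card_eq_finsetCard _)

theorem card_isDistinct_eq_card_countRestricted {m : ℕ} (hm : 0 < m) (n : ℕ) :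
    Nat.card {P : n.Partition // P.IsDistinct m} = #(countRestricted n m) :=
  (Nat.card_congr (Equiv.subtypeEquivRight (isDistinct_iff_mem_countRestricted hm))).trans
    (Nat.card_eq_finsetCard _)

end Nat.Partition

/-- Glaisher's theorem: the number of partitions of `n` into parts not divisible
by `m` equals the number of partitions of `n` in which every part appears fewer
than `m` times. -/
theorem glaisher (m : ℕ) (hm : 2 ≤ m) (n : ℕ) :
    Nat.card {P : n.Partition // P.IsRegular m} =
      Nat.card {P : n.Partition // P.IsDistinct m} := by
  have hm₀ : 0 < m := by omega
  rw [Nat.Partition.card_isRegular_eq_card_restricted,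
    Nat.Partition.card_isDistinct_eq_card_countRestricted hm₀,
    Nat.Partition.card_restricted_eq_card_countRestricted n hm₀]
end

section
/- For every natural number n and integer m ≥ 2, the number of partitions of n in which every part appears fewer than m times equals the number of partitions of n in which consecutive parts differ by less than m and the smallest part is less than m. -/
/-- A partition is `m`-flat if consecutive parts differ by less than `m` and the
smallest part is less than `m`; equivalently, every part is either less than `m`
or within less than `m` of some strictly smaller part. -/
def Nat.Partition.IsFlat {n : ℕ} (m : ℕ) (P : n.Partition) : Prop :=
  ∀ a ∈ P.parts, a < m ∨ ∃ b ∈ P.parts, b < a ∧ a - b < m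

namespace ConjAux

open Multiset

/-- Number of parts of `P` that are at least `a`. -/
def cge {n : ℕ} (P : n.Partition) (a : ℕ) : ℕ := Multiset.countP (a ≤ ·) P.parts

lemma countP_anti (s : Multiset ℕ) {a b : ℕ} (h : a ≤ b) :
    Multiset.countP (b ≤ ·) s ≤ Multiset.countP (a ≤ ·) s := by
  induction s using Multiset.induction_on with
  | empty => simp
  | cons x s ih =>
    rw [Multiset.countP_cons, Multiset.countP_cons]
    split_ifs <;> omega

lemma cge_anti {n : ℕ} (P : n.Partition) {a b : ℕ} (h : a ≤ b) : cge P b ≤ cge P a :=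
  countP_anti P.parts h

lemma part_le {n : ℕ} (P : n.Partition) {p : ℕ} (hp : p ∈ P.parts) : p ≤ n := by
  have := Multiset.le_sum_of_mem hp (α := ℕ)
  · rwa [P.parts_sum] at this

lemma cge_eq_zero {n : ℕ} (P : n.Partition) {a : ℕ} (h : n < a) : cge P a = 0 := by
  rw [cge, Multiset.countP_eq_zero]
  intro x hx hax
  exact absurd (part_le P hx) (by omega)

lemma cge_pos_le {n : ℕ} (P : n.Partition) {a : ℕ} (h : 0 < cge P a) : a ≤ n := by
  by_contra hc
  rw [cge_eq_zero P (by omega)] at h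
  exact absurd h (by omega)

lemma countP_split (s : Multiset ℕ) (a : ℕ) :
    Multiset.countP (a ≤ ·) s = Multiset.count a s + Multiset.countP (a + 1 ≤ ·) s := by
  induction s using Multiset.induction_on with
  | empty => simp
  | cons x s ih =>
    rw [Multiset.countP_cons, Multiset.count_cons, Multiset.countP_cons, ih]
    split_ifs <;> omega

lemma count_add_cge {n : ℕ} (P : n.Partition) (a : ℕ) :
    cge P a = P.parts.count a + cge P (a + 1) :=
  countP_split P.parts a

lemma filter_range_lt (x N : ℕ) :
    (Finset.range N).filter (fun i => i + 1 ≤ x) = Finset.range (min x N) := by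
  ext i; simp only [Finset.mem_filter, Finset.mem_range, lt_min_iff]; omega

lemma sum_cge_aux (N : ℕ) (s : Multiset ℕ) (h : ∀ x ∈ s, x ≤ N) :
    ∑ i ∈ Finset.range N, Multiset.countP (i + 1 ≤ ·) s = s.sum := by
  induction s using Multiset.induction_on with
  | empty => simp
  | cons x s ih =>
    simp only [Multiset.countP_cons, Multiset.sum_cons]
    rw [Finset.sum_add_distrib, ih (fun y hy => h y (Multiset.mem_cons_of_mem hy))]
    have hx : x ≤ N := h x (Multiset.mem_cons_self x s)
    have : ∑ i ∈ Finset.range N, (if i + 1 ≤ x then 1 else 0) = x := by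
      rw [Finset.sum_boole, filter_range_lt, Finset.card_range, min_eq_left hx]
      simp
    omega

lemma conj_parts_sum_aux {n : ℕ} (P : n.Partition) :
    (((Multiset.range n).map (fun i => cge P (i + 1))).filter (0 < ·)).sum = n := by
  have key : ((Multiset.range n).map (fun i => cge P (i + 1))).sum = n := by
    rw [← Finset.range_val n, ← Finset.sum_eq_multiset_sum]
    have := sum_cge_aux n P.parts (fun x hx => part_le P hx)
    rw [P.parts_sum] at this
    exact this
  have hsplit := Multiset.filter_add_not (0 < ·) ((Multiset.range n).map (fun i => cge P (i + 1)))
  have h0 : ((Multiset.filter (fun a => ¬ 0 < a)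
      ((Multiset.range n).map (fun i => cge P (i + 1))))).sum = 0 := by
    apply Multiset.sum_eq_zero
    intro x hx
    have := Multiset.of_mem_filter hx
    omega
  have := congrArg Multiset.sum hsplit
  rw [Multiset.sum_add, h0, key] at this
  omega

/-- The conjugate partition. -/
def conj {n : ℕ} (P : n.Partition) : n.Partition where
  parts := ((Multiset.range n).map (fun i => cge P (i + 1))).filter (0 < ·)
  parts_pos := fun hi => Multiset.of_mem_filter hi
  parts_sum := conj_parts_sum_aux P

lemma mem_conj {n : ℕ} (P : n.Partition) {v : ℕ} :
    v ∈ (conj P).parts ↔ 0 < v ∧ ∃ i < n, cge P (i + 1) = v := by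
  simp only [conj, Multiset.mem_filter, Multiset.mem_map, Multiset.mem_range]
  tauto

lemma count_conj {n : ℕ} (P : n.Partition) {v : ℕ} (hv : 0 < v) :
    (conj P).parts.count v = ((Finset.range n).filter (fun i => cge P (i + 1) = v)).card := by
  show Multiset.count v _ = _
  rw [conj]
  simp only
  rw [Multiset.count_filter_of_pos hv, Multiset.count_map]
  rw [Finset.card, Finset.filter_val, Finset.range_val]
  congr 1
  apply Multiset.filter_congr
  intro x _
  exact eq_comm

lemma conj_flat {n m : ℕ} {P : n.Partition} (hP : P.IsDistinct m) : (conj P).IsFlat m := by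
  intro v hv
  rw [mem_conj] at hv
  obtain ⟨hv0, i, hi, hfi⟩ := hv
  classical
  set T := (Finset.Icc 1 n).filter (fun a => cge P a = v) with hT
  have hin : i + 1 ≤ n := cge_pos_le P (by omega)
  have hne : (i + 1) ∈ T := by
    simp only [hT, Finset.mem_filter, Finset.mem_Icc]
    exact ⟨⟨by omega, hin⟩, hfi⟩
  set b := T.max' ⟨_, hne⟩ with hb
  have hbT : b ∈ T := Finset.max'_mem _ _
  simp only [hT, Finset.mem_filter, Finset.mem_Icc] at hbT
  obtain ⟨⟨hb1, hbn⟩, hfb⟩ := hbT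
  have hnext : cge P (b + 1) < v := by
    have hle : cge P (b + 1) ≤ v := hfb ▸ cge_anti P (by omega)
    rcases eq_or_lt_of_le hle with heq | hlt
    · exfalso
      have hbn1 : b + 1 ≤ n := cge_pos_le P (by omega)
      have : (b + 1) ∈ T := by
        simp only [hT, Finset.mem_filter, Finset.mem_Icc]
        exact ⟨⟨by omega, hbn1⟩, heq⟩
      have := Finset.le_max' T _ this
      omega
    · exact hlt
  have hcount := count_add_cge P b
  have hcb : P.parts.count b < m := hP b
  by_cases h0 : cge P (b + 1) = 0
  · left; omega
  · right
    refine ⟨cge P (b + 1), ?_, by omega, by omega⟩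
    rw [mem_conj]
    have hbn1 : b + 1 ≤ n := cge_pos_le P (by omega)
    exact ⟨by omega, b, by omega, rfl⟩

lemma conj_distinct {n m : ℕ} (hm : 2 ≤ m) {P : n.Partition} (hP : P.IsFlat m) :
    (conj P).IsDistinct m := by
  intro v
  rcases Nat.eq_zero_or_pos v with rfl | hv0
  · have : (conj P).parts.count 0 = 0 :=
      Multiset.count_eq_zero_of_notMem (fun h => by simpa using (conj P).parts_pos h)
    omega
  rw [count_conj _ hv0]
  set T := (Finset.range n).filter (fun i => cge P (i + 1) = v) with hT
  rcases T.eq_empty_or_nonempty with h | hne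
  · rw [h]; simpa using by omega
  set i0 := T.min' hne with hi0
  set i1 := T.max' hne with hi1
  have hi0T : i0 ∈ T := Finset.min'_mem _ _
  have hi1T : i1 ∈ T := Finset.max'_mem _ _
  simp only [hT, Finset.mem_filter, Finset.mem_range] at hi0T hi1T
  obtain ⟨hi0n, hfi0⟩ := hi0T
  obtain ⟨hi1n, hfi1⟩ := hi1T
  have hmono : ∀ a, i0 + 1 ≤ a → a ≤ i1 + 1 → cge P a = v := by
    intro a h1 h2
    have := cge_anti P h1
    have := cge_anti P h2
    omega
  have hTIcc : T = Finset.Icc i0 i1 := by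
    apply Finset.Subset.antisymm
    · intro j hj
      simp only [Finset.mem_Icc]
      exact ⟨Finset.min'_le _ _ hj, Finset.le_max' _ _ hj⟩
    · intro j hj
      simp only [Finset.mem_Icc] at hj
      simp only [hT, Finset.mem_filter, Finset.mem_range]
      exact ⟨by omega, hmono _ (by omega) (by omega)⟩
  have hcard : T.card = i1 - i0 + 1 := by
    rw [hTIcc, Nat.card_Icc]
    have : i0 ≤ i1 := Finset.min'_le _ _ (Finset.max'_mem _ _)
    omega
  have hnext : cge P (i1 + 2) < v := by
    have hle : cge P (i1 + 2) ≤ v := hfi1 ▸ cge_anti P (by omega)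
    rcases eq_or_lt_of_le hle with heq | hlt
    · exfalso
      have h2n : i1 + 2 ≤ n := cge_pos_le P (by omega)
      have : (i1 + 1) ∈ T := by
        simp only [hT, Finset.mem_filter, Finset.mem_range]
        exact ⟨by omega, heq⟩
      have := Finset.le_max' T _ this
      omega
    · exact hlt
  have hb1mem : (i1 + 1) ∈ P.parts := by
    have h5 := count_add_cge P (i1 + 1)
    have hrfl : cge P (i1 + 1 + 1) = cge P (i1 + 2) := rfl
    exact Multiset.count_pos.mp (by omega)
  rcases hP (i1 + 1) hb1mem with h | ⟨q, hq, hqlt, hqm⟩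
  · omega
  · have hqi0 : q ≤ i0 := by
      by_contra hc
      push_neg at hc
      have h1 : cge P q = v := hmono q (by omega) (by omega)
      have h2 : cge P (q + 1) = v := hmono (q + 1) (by omega) (by omega)
      have h3 := count_add_cge P q
      have h4 : 0 < P.parts.count q := Multiset.count_pos.mpr hq
      omega
    omega

lemma cge_conj {n : ℕ} (P : n.Partition) {a b : ℕ} (ha : 1 ≤ a) (hb : 1 ≤ b) :
    (a ≤ cge P b ↔ b ≤ cge (conj P) a) := by
  classical
  have hS : cge (conj P) a
      = ((Finset.range n).filter (fun i => a ≤ cge P (i + 1))).card := by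
    rw [cge, conj]
    simp only
    rw [Multiset.countP_filter, Multiset.countP_map]
    rw [Finset.card, Finset.filter_val, Finset.range_val]
    congr 1
    apply Multiset.filter_congr
    intro x _
    constructor
    · exact fun h => h.1
    · exact fun h => ⟨h, by omega⟩
  rw [hS]
  set S := (Finset.range n).filter (fun i => a ≤ cge P (i + 1)) with hSdef
  constructor
  · intro h
    have hbn : b ≤ n := cge_pos_le P (by omega)
    have hsub : Finset.range b ⊆ S := by
      intro j hj
      simp only [Finset.mem_range] at hj
      simp only [hSdef, Finset.mem_filter, Finset.mem_range]
      have := cge_anti P (show j + 1 ≤ b by omega)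
      exact ⟨by omega, by omega⟩
    have := Finset.card_le_card hsub
    simpa using this
  · intro h
    by_contra hc
    push_neg at hc
    have hsub : S ⊆ Finset.range (b - 1) := by
      intro i hi
      simp only [hSdef, Finset.mem_filter, Finset.mem_range] at hi
      simp only [Finset.mem_range]
      by_contra hic
      push_neg at hic
      have := cge_anti P (show b ≤ i + 1 by omega)
      omega
    have := Finset.card_le_card hsub
    rw [Finset.card_range] at this
    omega

lemma conj_injective {n : ℕ} : Function.Injective (conj (n := n)) := by
  intro P Q h
  have hc : ∀ b, 1 ≤ b → cge P b = cge Q b := by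
    intro b hb
    have h1 : ∀ a, 1 ≤ a → (a ≤ cge P b ↔ a ≤ cge Q b) := by
      intro a ha
      rw [cge_conj P ha hb, cge_conj Q ha hb, h]
    rcases Nat.eq_zero_or_pos (cge P b) with h0 | hp
    · rcases Nat.eq_zero_or_pos (cge Q b) with h0' | hq
      · omega
      · have := (h1 (cge Q b) hq).mpr le_rfl; omega
    · have := (h1 (cge P b) hp).mp le_rfl
      rcases Nat.eq_zero_or_pos (cge Q b) with h0' | hq
      · omega
      · have := (h1 (cge Q b) hq).mpr le_rfl; omega
  apply Nat.Partition.ext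
  rw [Multiset.ext]
  intro a
  rcases Nat.eq_zero_or_pos a with rfl | ha
  · rw [Multiset.count_eq_zero_of_notMem (fun hz => by simpa using P.parts_pos hz),
      Multiset.count_eq_zero_of_notMem (fun hz => by simpa using Q.parts_pos hz)]
  · have h1 := count_add_cge P a
    have h2 := count_add_cge Q a
    have h3 := hc a ha
    have h4 := hc (a + 1) (by omega)
    omega

end ConjAux

/-- The number of `m`-distinct partitions of `n` equals the number of `m`-flat
partitions of `n` (by conjugation of Ferrers diagrams). -/
theorem distinct_eq_flat (m : ℕ) (hm : 2 ≤ m) (n : ℕ) :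
    Nat.card {P : n.Partition // P.IsDistinct m} =
      Nat.card {P : n.Partition // P.IsFlat m} := by
  apply le_antisymm
  · exact Nat.card_le_card_of_injective
      (fun P => (⟨ConjAux.conj P.1, ConjAux.conj_flat P.2⟩ : {P : n.Partition // P.IsFlat m}))
      (fun x y hxy => Subtype.ext (ConjAux.conj_injective (congrArg Subtype.val hxy)))
  · exact Nat.card_le_card_of_injective
      (fun P => (⟨ConjAux.conj P.1, ConjAux.conj_distinct hm P.2⟩ :
        {P : n.Partition // P.IsDistinct m}))
      (fun x y hxy => Subtype.ext (ConjAux.conj_injective (congrArg Subtype.val hxy)))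
end

section
/- The generating function for partitions that are simultaneously s-regular and t-distinct is ∏_{k≥1} (1-q^{sk})(1-q^{tk}) / ((1-q^k)(1-q^{stk})), i.e., the number of such partitions of n equals the coefficient of q^n in this product. -/
open PowerSeries

/-!
Put `A k = 1 + q^k + ⋯ + q^{(t-1)k} = (1 - q^{tk}) / (1 - q^k)`. In `Nat.Partition.genFun`, a part
`k` with `s ∤ k` may occur `c < t` times and contributes `q^{kc}`, so the generating function of
`s`-regular `t`-distinct partitions is `∏_{s ∤ k} A k`. On the other side, the `k`-th factor of the
product is `A k / A (s k)`. In the product over `k ≤ n`, the denominators `A (s k)` with `s k ≤ n`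
cancel against the numerators `A k` with `s ∣ k`; the remaining denominators (`s k > n`), like the
factors `A k` with `k > n` of the infinite product, are `≡ 1 mod q^{n+1}`.
-/

open Finset
open scoped PowerSeries.WithPiTopology

namespace Finset

theorem prod_Icc_eq_prod_filter_not_dvd_mul_prod_Icc_div {M : Type*} [CommMonoid M] (f : ℕ → M)
    {s : ℕ} (hs : 0 < s) (n : ℕ) :
    ∏ k ∈ Icc 1 n, f k = (∏ k ∈ Icc 1 n with ¬ s ∣ k, f k) * ∏ j ∈ Icc 1 (n / s), f (s * j) := by
  have hmultiples : {k ∈ Icc 1 n | s ∣ k} = (Icc 1 (n / s)).image (s * ·) := by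
    ext k
    simp only [mem_filter, mem_Icc, mem_image, Nat.le_div_iff_mul_le hs]
    constructor
    · rintro ⟨⟨hk, hkn⟩, j, rfl⟩
      exact ⟨j, ⟨Nat.pos_of_mul_pos_left hk, by rwa [mul_comm]⟩, rfl⟩
    · rintro ⟨j, ⟨hj, hjn⟩, rfl⟩
      exact ⟨⟨Nat.mul_pos hs hj, by rwa [mul_comm]⟩, dvd_mul_right s j⟩
  rw [← prod_filter_not_mul_prod_filter _ (s ∣ ·), hmultiples,
    prod_image fun a _ b _ h => Nat.eq_of_mul_eq_mul_left hs h]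

theorem prod_Icc_mul_prod_Ioc_div_eq {M : Type*} [CommMonoid M] {F A : ℕ → M} {s n : ℕ}
    (hs : 0 < s) (hF : ∀ k ∈ Icc 1 n, F k * A (s * k) = A k)
    (hA : ∀ k ∈ Icc 1 (n / s), IsRightRegular (A (s * k))) :
    (∏ k ∈ Icc 1 n, F k) * ∏ k ∈ Ioc (n / s) n, A (s * k) = ∏ k ∈ Icc 1 n with ¬ s ∣ k, A k := by
  have hsplit : ∏ k ∈ Icc 1 n, A (s * k) =
      (∏ k ∈ Icc 1 (n / s), A (s * k)) * ∏ k ∈ Ioc (n / s) n, A (s * k) := by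
    simp only [show ∀ m, Icc 1 m = Ioc 0 m from Icc_add_one_left_eq_Ioc 0]
    exact (prod_Ioc_consecutive _ (Nat.zero_le _) (Nat.div_le_self n s)).symm
  refine IsRightRegular.prod hA ?_
  calc (∏ k ∈ Icc 1 n, F k) * (∏ k ∈ Ioc (n / s) n, A (s * k)) * ∏ k ∈ Icc 1 (n / s), A (s * k)
      = (∏ k ∈ Icc 1 n, F k) * ∏ k ∈ Icc 1 n, A (s * k) := by rw [hsplit]; ac_rfl
    _ = ∏ k ∈ Icc 1 n, A k := by rw [← prod_mul_distrib]; exact prod_congr rfl hF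
    _ = _ := prod_Icc_eq_prod_filter_not_dvd_mul_prod_Icc_div A hs n

end Finset

namespace PowerSeries

section CommRing

variable {R : Type*} [CommRing R]

theorem coeff_eq_of_smodEq {n : ℕ} {f g : R⟦X⟧} (h : f ≡ g [SMOD Ideal.span {X ^ (n + 1)}]) :
    coeff n f = coeff n g := by
  rw [SModEq.sub_mem, Ideal.mem_span_singleton, X_pow_dvd_iff] at h
  simpa [sub_eq_zero] using h n n.lt_succ_self

theorem geom_sum_X_pow_smodEq_one {m n t : ℕ} (hnm : n < m) (ht : 0 < t) :
    ∑ j ∈ range t, (X ^ m : R⟦X⟧) ^ j ≡ 1 [SMOD Ideal.span {X ^ (n + 1)}] := by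
  have hX : (X ^ m : R⟦X⟧) ≡ 0 [SMOD Ideal.span {X ^ (n + 1)}] :=
    SModEq.zero.2 (Ideal.mem_span_singleton.2 (pow_dvd_pow X hnm))
  have hzero : ∑ j ∈ range t, (0 : R⟦X⟧) ^ j = 1 := by
    obtain ⟨t, rfl⟩ := Nat.exists_eq_add_one_of_ne_zero ht.ne'
    simp [sum_range_succ']
  exact hzero ▸ SModEq.sum fun j _ => hX.pow j

theorem geom_sum_X_pow_ne_zero [Nontrivial R] {m t : ℕ} (hm : m ≠ 0) (ht : 0 < t) :
    ∑ j ∈ range t, (X ^ m : R⟦X⟧) ^ j ≠ 0 := fun h => by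
  simpa [h] using coeff_eq_of_smodEq (geom_sum_X_pow_smodEq_one (R := R) (n := 0)
    (Nat.pos_of_ne_zero hm) ht)

theorem coeff_eq_coeff_prod_of_hasProd {ι : Type*} [TopologicalSpace R] [T2Space R]
    {f : ι → R⟦X⟧} {a : R⟦X⟧} (ha : HasProd f a) {n : ℕ} (s : Finset ι)
    (hf : ∀ i ∉ s, f i ≡ 1 [SMOD Ideal.span {X ^ (n + 1)}]) :
    coeff n a = coeff n (∏ i ∈ s, f i) := by
  classical
  refine tendsto_nhds_unique (((WithPiTopology.continuous_coeff R n).tendsto a).comp ha) ?_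
  refine tendsto_atTop_of_eventually_const (i₀ := s) fun u (hu : s ⊆ u) => ?_
  refine coeff_eq_of_smodEq ?_
  dsimp only
  rw [← prod_sdiff hu]
  have htail : ∏ i ∈ u \ s, f i ≡ 1 [SMOD Ideal.span {X ^ (n + 1)}] := by
    simpa using SModEq.prod fun i hi => hf i (mem_sdiff.1 hi).2
  simpa using htail.mul (SModEq.refl (∏ i ∈ s, f i))

end CommRing

section Field

variable (K : Type*) [Field K]

noncomputable def regularDistinctFactor (s t k : ℕ) : K⟦X⟧ :=
  (1 - X ^ (s * k)) * (1 - X ^ (t * k)) * ((1 - X ^ k) * (1 - X ^ (s * t * k)))⁻¹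

variable {K}

theorem regularDistinctFactor_mul_geom_sum {s t k : ℕ} (hs : 0 < s) (ht : 0 < t) (hk : k ≠ 0) :
    regularDistinctFactor K s t k * ∑ j ∈ range t, (X ^ (s * k) : K⟦X⟧) ^ j =
      ∑ j ∈ range t, (X ^ k : K⟦X⟧) ^ j := by
  have hD : constantCoeff ((1 - X ^ k) * (1 - X ^ (s * t * k)) : K⟦X⟧) ≠ 0 := by
    simp [zero_pow hk, zero_pow (Nat.mul_ne_zero (Nat.mul_ne_zero hs.ne' ht.ne') hk)]
  have hgeom_k := geom_sum_mul_neg (X ^ k : K⟦X⟧) t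
  have hgeom_sk := geom_sum_mul_neg (X ^ (s * k) : K⟦X⟧) t
  rw [← pow_mul] at hgeom_k hgeom_sk
  rw [regularDistinctFactor, mul_right_comm, eq_comm, eq_mul_inv_iff_mul_eq hD]
  linear_combination (1 - X ^ (s * t * k)) * hgeom_k - (1 - X ^ (t * k)) * hgeom_sk

theorem coeff_prod_regularDistinctFactor {s t : ℕ} (hs : 0 < s) (ht : 0 < t) (n : ℕ) :
    coeff n (∏ k ∈ Icc 1 n, regularDistinctFactor K s t k) =
      coeff n (∏ k ∈ Icc 1 n with ¬ s ∣ k, ∑ j ∈ range t, (X ^ k : K⟦X⟧) ^ j) := by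
  have hne_zero {k m : ℕ} (hk : k ∈ Icc 1 m) : k ≠ 0 := Nat.one_le_iff_ne_zero.1 (mem_Icc.1 hk).1
  have hcancel := prod_Icc_mul_prod_Ioc_div_eq (F := regularDistinctFactor K s t)
    (A := fun m => ∑ j ∈ range t, (X ^ m : K⟦X⟧) ^ j) (n := n) hs
    (fun k hk => regularDistinctFactor_mul_geom_sum hs ht (hne_zero hk))
    fun k hk => (IsRegular.of_ne_zero (geom_sum_X_pow_ne_zero
      (Nat.mul_ne_zero hs.ne' (hne_zero hk)) ht)).right
  have htail : ∏ k ∈ Ioc (n / s) n, ∑ j ∈ range t, (X ^ (s * k) : K⟦X⟧) ^ j ≡ 1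
      [SMOD Ideal.span {X ^ (n + 1)}] := by
    refine prod_const_one (M := K⟦X⟧) (s := Ioc (n / s) n) ▸ SModEq.prod fun k hk => ?_
    refine geom_sum_X_pow_smodEq_one ?_ ht
    have := (Nat.div_lt_iff_lt_mul hs).1 (mem_Ioc.1 hk).1
    linarith
  have hmod := (SModEq.refl (∏ k ∈ Icc 1 n, regularDistinctFactor K s t k)).mul htail
  rw [mul_one, hcancel] at hmod
  exact coeff_eq_of_smodEq hmod.symm

end Field

end PowerSeries

namespace Nat.Partition

def regularDistinctCharacter (R : Type*) [Semiring R] (s t i c : ℕ) : R :=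
  if ¬ s ∣ i ∧ c < t then 1 else 0

theorem coeff_genFun_regularDistinctCharacter {R : Type*} [CommSemiring R] {s t : ℕ} (ht : 0 < t)
    (n : ℕ) :
    coeff n (genFun (regularDistinctCharacter R s t)) =
      Nat.card {P : n.Partition // P.IsRegular s ∧ P.IsDistinct t} := by
  classical
  rw [Nat.card_eq_fintype_card, Fintype.card_subtype, coeff_genFun]
  simp only [Finsupp.prod, regularDistinctCharacter, prod_boole, sum_boole]
  congr 2
  refine filter_congr fun P _ => ?_
  simp only [Multiset.toFinsupp_support, Multiset.toFinsupp_apply, Multiset.mem_toFinset,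
    forall_and, IsRegular, IsDistinct]
  refine and_congr_right fun _ => ⟨fun h a => ?_, fun h a _ => h a⟩
  by_cases ha : a ∈ P.parts
  · exact h a ha
  · rwa [Multiset.count_eq_zero_of_notMem ha]

theorem hasProd_genFun_regularDistinctCharacter {R : Type*} [CommSemiring R]
    [TopologicalSpace R] [T2Space R] {s t : ℕ} (ht : 0 < t) :
    HasProd (fun i ↦ if ¬ s ∣ i + 1 then ∑ j ∈ range t, (X ^ (i + 1) : R⟦X⟧) ^ j else 1)
      (genFun (regularDistinctCharacter R s t)) := by
  convert hasProd_genFun (regularDistinctCharacter R s t) using 2 with i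
  obtain ⟨t, rfl⟩ := Nat.exists_eq_add_one_of_ne_zero ht.ne'
  rw [tsum_eq_sum (s := range t) fun j hj => by simp_all [regularDistinctCharacter]]
  split_ifs with hdvd
  · simp [regularDistinctCharacter, hdvd]
  · rw [sum_range_succ', pow_zero, add_comm]
    refine congrArg _ (sum_congr rfl fun j hj => ?_)
    simp [regularDistinctCharacter, hdvd, mem_range.1 hj, pow_mul]

end Nat.Partition

/-- The generating function for partitions simultaneously `s`-regular and
`t`-distinct is `∏_{k ≥ 1} (1-q^{sk})(1-q^{tk})/((1-q^k)(1-q^{stk}))`: the number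
of such partitions of `n` is the coefficient of `q^n` in this product.  (Since
the `k`-th factor is `1 + O(q^k)`, the coefficient of `q^n` in the infinite
product equals the coefficient of `q^n` in the product of the factors with
`1 ≤ k ≤ n`.) -/
theorem regular_distinct_genfun (s t : ℕ) (hs : 2 ≤ s) (ht : 2 ≤ t) (n : ℕ) :
    (Nat.card {P : n.Partition // P.IsRegular s ∧ P.IsDistinct t} : ℚ) =
      PowerSeries.coeff (R := ℚ) n
        (∏ k ∈ Finset.Icc 1 n,
          (1 - (X : PowerSeries ℚ) ^ (s * k)) * (1 - (X : PowerSeries ℚ) ^ (t * k)) *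
            ((1 - (X : PowerSeries ℚ) ^ k) * (1 - (X : PowerSeries ℚ) ^ (s * t * k)))⁻¹) := by
  have hs' : 0 < s := by omega
  have ht' : 0 < t := by omega
  let A (k : ℕ) : ℚ⟦X⟧ := if ¬ s ∣ k then ∑ j ∈ range t, (X ^ k) ^ j else 1
  calc (Nat.card {P : n.Partition // P.IsRegular s ∧ P.IsDistinct t} : ℚ)
      = coeff n (Nat.Partition.genFun (Nat.Partition.regularDistinctCharacter ℚ s t)) :=
        (Nat.Partition.coeff_genFun_regularDistinctCharacter (R := ℚ) (s := s) ht' n).symm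
    _ = coeff n (∏ i ∈ range n, A (i + 1)) := by
        refine coeff_eq_coeff_prod_of_hasProd
          (Nat.Partition.hasProd_genFun_regularDistinctCharacter (R := ℚ) (s := s) ht') _
          fun i hi => ?_
        have hni : n < i + 1 := by rw [mem_range] at hi; omega
        split_ifs
        · exact SModEq.rfl
        · exact geom_sum_X_pow_smodEq_one hni ht'
    _ = coeff n (∏ k ∈ Icc 1 n with ¬ s ∣ k, ∑ j ∈ range t, (X ^ k : ℚ⟦X⟧) ^ j) := by
        rw [prod_filter, range_eq_Ico, prod_Ico_add' A, zero_add, Ico_add_one_right_eq_Icc]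
    _ = _ := (coeff_prod_regularDistinctFactor hs' ht' n).symm
end

section
/- For all integers s, t ≥ 2 and every natural number n, the number of partitions of n that are s-regular and t-distinct equals the number of partitions of n that are t-regular and s-distinct. -/
/-!
Write `P k = ∏_{i ≥ 1} (1 - X^(k i))`. The generating function `G s t` of `s`-regular,
`t`-distinct partitions is `∏_{s ∤ i} (1 + X^i + ⋯ + X^((t-1) i))`. Multiplying by `P 1`
telescopes each factor at `s ∤ i` to `1 - X^(t i)`, leaving `1 - X^i` at the multiples of `s`;
the missing factors `1 - X^(t i)` at those multiples form `P (s t)`. Hence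
`G s t * P 1 * P (s t) = P t * P s`, which is symmetric in `s` and `t`, and `P 1 * P (s t)` is a
unit of the power series ring.
-/

open Finset PowerSeries
open PowerSeries.WithPiTopology

theorem hasProd_ite_dvd_succ_iff {M : Type*} [CommMonoid M] [TopologicalSpace M] {s : ℕ}
    (hs : 0 < s) (f : ℕ → M) {a : M} :
    HasProd (fun i ↦ if s ∣ i + 1 then f (i + 1) else 1) a ↔
      HasProd (fun j ↦ f (s * (j + 1))) a := by
  have hpos (j : ℕ) : 0 < s * (j + 1) := Nat.mul_pos hs j.succ_pos
  have hg : Function.Injective fun j ↦ s * (j + 1) - 1 := fun a b h ↦ by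
    simp only at h
    have := Nat.eq_of_mul_eq_mul_left hs (by have := hpos a; have := hpos b; omega :
      s * (a + 1) = s * (b + 1))
    omega
  rw [← hg.hasProd_iff]
  · congr! 1
    funext j
    have : s * (j + 1) - 1 + 1 = s * (j + 1) := by have := hpos j; omega
    simp [this]
  · intro i hi
    rw [if_neg]
    rintro ⟨k, hk⟩
    refine hi ⟨k - 1, ?_⟩
    rcases k with _ | k
    · simp at hk
    · simp only [Nat.add_sub_cancel]; omega

namespace PowerSeries.WithPiTopology

variable (R : Type*) [CommRing R] [TopologicalSpace R]

theorem multipliable_one_sub_X_pow_mul {k : ℕ} (hk : 0 < k) :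
    Multipliable fun i ↦ (1 : R⟦X⟧) - X ^ (k * (i + 1)) := by
  nontriviality R
  simp_rw [sub_eq_add_neg]
  apply multipliable_one_add_of_tendsto_order_atTop_nhds_top
  refine ENat.tendsto_nhds_top_iff_natCast_lt.mpr fun n ↦ Filter.eventually_atTop.mpr ⟨n, ?_⟩
  intro m hm
  rw [order_neg, order_X_pow]
  norm_cast
  nlinarith

theorem constantCoeff_tprod_one_sub_X_pow_mul [T2Space R] {k : ℕ} (hk : 0 < k) :
    constantCoeff (∏' i, (1 - X ^ (k * (i + 1)) : R⟦X⟧)) = 1 := by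
  rw [(multipliable_one_sub_X_pow_mul R hk).map_tprod _ (continuous_constantCoeff R)]
  simp [hk.ne']

end PowerSeries.WithPiTopology

namespace Nat.Partition

variable (R : Type*)

noncomputable def regularDistinctGenFun [Semiring R] (s t : ℕ) : R⟦X⟧ :=
  PowerSeries.mk fun n ↦ (Nat.card {P : n.Partition // P.IsRegular s ∧ P.IsDistinct t} : R)

theorem hasProd_regularDistinctGenFun [CommSemiring R] [TopologicalSpace R] [T2Space R]
    (s : ℕ) {t : ℕ} (ht : 0 < t) :
    HasProd (fun i ↦ if s ∣ i + 1 then 1 else ∑ j ∈ range t, (X : R⟦X⟧) ^ ((i + 1) * j))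
      (regularDistinctGenFun R s t) := by
  classical
  convert hasProd_genFun (fun i c ↦ if ¬ s ∣ i ∧ c < t then (1 : R) else 0) using 1
  · ext1 i
    split_ifs with hsi
    · simp [hsi]
    obtain ⟨t, rfl⟩ := Nat.exists_eq_add_one_of_ne_zero ht.ne'
    rw [sum_range_succ', add_comm, tsum_eq_sum (s := range t) fun j hj ↦ by simp_all]
    refine congrArg _ (sum_congr rfl fun j hj ↦ ?_)
    simp_all
  · ext n
    simp_rw [regularDistinctGenFun, coeff_mk, coeff_genFun, Finsupp.prod, prod_boole, sum_boole,
      Nat.card_eq_fintype_card, Fintype.card_subtype]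
    congr 3
    ext P
    simp only [IsRegular, IsDistinct, Multiset.toFinsupp_support, Multiset.toFinsupp_apply,
      Multiset.mem_toFinset]
    refine ⟨fun h a ha ↦ ⟨h.1 a ha, h.2 a⟩, fun h ↦ ⟨fun a ha ↦ (h a ha).1, fun a ↦ ?_⟩⟩
    by_cases ha : a ∈ P.parts
    · exact (h a ha).2
    · simpa [Multiset.count_eq_zero_of_notMem ha] using ht

theorem regularDistinctGenFun_mul_eq [CommRing R] [TopologicalSpace R] [IsTopologicalRing R]
    [T2Space R] {s t : ℕ} (hs : 0 < s) (ht : 0 < t) :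
    regularDistinctGenFun R s t * (∏' i, (1 - X ^ (i + 1))) * ∏' i, (1 - X ^ (t * s * (i + 1))) =
      (∏' i, (1 - X ^ (t * (i + 1)))) * ∏' i, (1 - X ^ (s * (i + 1))) := by
  have hts : HasProd (fun i ↦ if s ∣ i + 1 then 1 - X ^ (t * (i + 1)) else 1)
      (∏' i, (1 - X ^ (t * s * (i + 1))) : R⟦X⟧) := by
    rw [hasProd_ite_dvd_succ_iff hs fun m ↦ 1 - X ^ (t * m)]
    simpa only [mul_assoc] using (multipliable_one_sub_X_pow_mul R (Nat.mul_pos ht hs)).hasProd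
  have hs' : HasProd (fun i ↦ if s ∣ i + 1 then 1 - X ^ (i + 1) else 1)
      (∏' i, (1 - X ^ (s * (i + 1))) : R⟦X⟧) :=
    (hasProd_ite_dvd_succ_iff hs fun m ↦ 1 - X ^ m).mpr
      (multipliable_one_sub_X_pow_mul R hs).hasProd
  -- restated so that the product lives in the `CommRing` instance of `R⟦X⟧`, like the others
  have hG : HasProd (fun i ↦ if s ∣ i + 1 then 1 else ∑ j ∈ range t, (X : R⟦X⟧) ^ ((i + 1) * j))
      (regularDistinctGenFun R s t) :=
    hasProd_regularDistinctGenFun R s ht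
  refine ((hG.mul (multipliable_one_sub_X_pow R).hasProd).mul hts).unique ?_
  convert (multipliable_one_sub_X_pow_mul R ht).hasProd.mul hs' using 1
  funext i
  split_ifs
  · ring
  · simp_rw [pow_mul, geom_sum_mul_neg, ← pow_mul, mul_comm]

theorem regularDistinctGenFun_comm [CommRing R] {s t : ℕ} (hs : 0 < s) (ht : 0 < t) :
    regularDistinctGenFun R s t = regularDistinctGenFun R t s := by
  let _ : TopologicalSpace R := ⊥
  have _ : DiscreteTopology R := ⟨rfl⟩
  have hunit : IsUnit ((∏' i, (1 - X ^ (i + 1))) * ∏' i, (1 - X ^ (t * s * (i + 1))) : R⟦X⟧) := by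
    have h1 : constantCoeff (∏' i, (1 - X ^ (i + 1)) : R⟦X⟧) = 1 := by
      simpa only [one_mul] using constantCoeff_tprod_one_sub_X_pow_mul R one_pos
    rw [isUnit_iff_constantCoeff, map_mul, h1,
      constantCoeff_tprod_one_sub_X_pow_mul R (Nat.mul_pos ht hs), mul_one]
    exact isUnit_one
  refine hunit.mul_right_cancel ?_
  rw [← mul_assoc, ← mul_assoc, regularDistinctGenFun_mul_eq R hs ht, mul_comm t s,
    regularDistinctGenFun_mul_eq R ht hs, mul_comm]

end Nat.Partition

/-- The number of partitions of `n` that are `s`-regular and `t`-distinct equals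
the number of partitions of `n` that are `t`-regular and `s`-distinct. -/
theorem regular_distinct_symm (s t : ℕ) (hs : 2 ≤ s) (ht : 2 ≤ t) (n : ℕ) :
    Nat.card {P : n.Partition // P.IsRegular s ∧ P.IsDistinct t} =
      Nat.card {P : n.Partition // P.IsRegular t ∧ P.IsDistinct s} := by
  have h := congrArg (coeff n)
    (Nat.Partition.regularDistinctGenFun_comm ℤ (by omega : 0 < s) (by omega : 0 < t))
  simpa [Nat.Partition.regularDistinctGenFun] using h
end

section
/- If s and t are coprime integers ≥ 2, then for every n the number of partitions of n that are simultaneously s-regular and t-distinct equals the number of partitions of n that are simultaneously s-regular and t-regular. -/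
namespace Nat.Partition

open PowerSeries PowerSeries.WithPiTopology Finset

variable {s t : ℕ}

/-- On one-based indices `k = i + 1`, `dilate s t` fixes the multiples of `s` and multiplies
the other indices by `t`. -/
def dilate (s t i : ℕ) : ℕ := if s ∣ i + 1 then i else (i + 1) * t - 1

theorem dilate_add_one (ht : 0 < t) (i : ℕ) :
    dilate s t i + 1 = if s ∣ i + 1 then i + 1 else (i + 1) * t := by
  unfold dilate
  split_ifs
  · rfl
  · have : 0 < (i + 1) * t := by positivity
    omega

theorem dilate_injective (hst : s.Coprime t) (ht : 0 < t) : (dilate s t).Injective := by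
  intro i j h
  have h' := dilate_add_one (s := s) ht i
  rw [h, dilate_add_one ht j] at h'
  split_ifs at h' with hj hi hi
  · omega
  · exact absurd (hst.dvd_mul_right.1 (h' ▸ hj)) hi
  · exact absurd (hst.dvd_mul_right.1 (h' ▸ hi)) hj
  · exact Nat.succ_injective (Nat.eq_of_mul_eq_mul_right ht h').symm

theorem mem_range_dilate (ht : 0 < t) {m : ℕ} (hm : s ∣ m + 1 ∨ t ∣ m + 1) :
    m ∈ Set.range (dilate s t) := by
  by_cases hs : s ∣ m + 1
  · exact ⟨m, if_pos hs⟩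
  · obtain ⟨k, hk⟩ := hm.resolve_left hs
    have hk0 : k ≠ 0 := by rintro rfl; simp at hk
    have hsk : ¬ s ∣ k := fun h ↦ hs (hk ▸ h.mul_left t)
    refine ⟨k - 1, ?_⟩
    have := dilate_add_one (s := s) ht (k - 1)
    rw [Nat.sub_add_cancel (Nat.one_le_iff_ne_zero.2 hk0), if_neg hsk, mul_comm, ← hk] at this
    omega

theorem isRegular_and_isDistinct_iff (ht : 0 < t) {n : ℕ} (P : n.Partition) :
    P.IsRegular s ∧ P.IsDistinct t ↔ ∀ i ∈ P.parts, ¬ s ∣ i ∧ P.parts.count i < t := by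
  unfold IsRegular IsDistinct
  refine ⟨fun h i hi ↦ ⟨h.1 i hi, h.2 i⟩, fun h ↦ ⟨fun i hi ↦ (h i hi).1, fun i ↦ ?_⟩⟩
  by_cases hi : i ∈ P.parts
  · exact (h i hi).2
  · rwa [Multiset.count_eq_zero_of_notMem hi]

section Semiring

variable (R : Type*) [CommSemiring R] [TopologicalSpace R] [T2Space R]

theorem hasProd_powerSeriesMk_card_regular_distinct (s : ℕ) (ht : 0 < t) :
    HasProd (fun i ↦ if s ∣ i + 1 then 1 else ∑ j ∈ range t, (X : R⟦X⟧) ^ ((i + 1) * j))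
      (PowerSeries.mk fun n ↦
        (Nat.card {P : n.Partition // P.IsRegular s ∧ P.IsDistinct t} : R)) := by
  classical
  convert hasProd_genFun (fun i c ↦ if ¬ s ∣ i ∧ c < t then (1 : R) else 0) using 1
  · ext1 i
    split_ifs with hs
    · simp [hs]
    · rw [sum_range_eq_add_Ico _ ht, sum_Ico_eq_sum_range, tsum_eq_sum (s := range (t - 1))]
      · refine congrArg₂ (· + ·) (by simp) (sum_congr rfl fun j hj ↦ ?_)
        have : j + 1 < t := by grind
        simp [hs, this, add_comm 1 j]
      · intro j hj
        have : ¬ j + 1 < t := by grind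
        simp [this]
  · ext n
    simp_rw [coeff_genFun, Finsupp.prod, prod_boole, coeff_mk, Nat.card_eq_fintype_card,
      Fintype.card_subtype, isRegular_and_isDistinct_iff ht]
    simp

theorem hasProd_powerSeriesMk_card_doubly_regular [IsTopologicalSemiring R] (s t : ℕ) :
    HasProd (fun i ↦ if ¬ s ∣ i + 1 ∧ ¬ t ∣ i + 1 then ∑' j, (X : R⟦X⟧) ^ ((i + 1) * j) else 1)
      (PowerSeries.mk fun n ↦
        (Nat.card {P : n.Partition // P.IsRegular s ∧ P.IsRegular t} : R)) := by
  classical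
  convert hasProd_powerSeriesMk_card_restricted R (fun i ↦ ¬ s ∣ i ∧ ¬ t ∣ i) using 3 with n
  rw [Nat.card_eq_fintype_card, Fintype.card_subtype]
  congr 2
  exact filter_congr fun P _ ↦ forall₂_and.symm

end Semiring

section Ring

variable (R : Type*) [CommRing R] [TopologicalSpace R]

theorem hasProd_powerSeriesMk_card_regular_distinct_mul [T2Space R] [IsTopologicalRing R]
    (s : ℕ) (ht : 0 < t) :
    HasProd (fun i ↦ if s ∣ i + 1 then 1 - X ^ (i + 1) else 1 - (X : R⟦X⟧) ^ ((i + 1) * t))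
      ((PowerSeries.mk fun n ↦
        (Nat.card {P : n.Partition // P.IsRegular s ∧ P.IsDistinct t} : R)) *
          ∏' i, (1 - X ^ (i + 1))) := by
  refine ((hasProd_powerSeriesMk_card_regular_distinct R s ht).mul
    (multipliable_one_sub_X_pow (R := R)).hasProd).congr_fun fun i ↦ ?_
  split_ifs
  · exact (one_mul _).symm
  · simp_rw [pow_mul, geom_sum_mul_neg]

theorem hasProd_powerSeriesMk_card_doubly_regular_mul [T2Space R] [IsTopologicalRing R]
    (s t : ℕ) :
    HasProd (fun i ↦ if ¬ s ∣ i + 1 ∧ ¬ t ∣ i + 1 then 1 else 1 - (X : R⟦X⟧) ^ (i + 1))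
      ((PowerSeries.mk fun n ↦
        (Nat.card {P : n.Partition // P.IsRegular s ∧ P.IsRegular t} : R)) *
          ∏' i, (1 - X ^ (i + 1))) := by
  refine ((hasProd_powerSeriesMk_card_doubly_regular R s t).mul
    (multipliable_one_sub_X_pow (R := R)).hasProd).congr_fun fun i ↦ ?_
  split_ifs
  · simp_rw [pow_mul]
    exact (tsum_pow_mul_one_sub_of_constantCoeff_eq_zero (by simp)).symm
  · exact (one_mul _).symm

theorem tprod_one_sub_X_pow_reindex_of_coprime (hst : s.Coprime t) (ht : 0 < t) :
    ∏' i, (if s ∣ i + 1 then 1 - X ^ (i + 1) else 1 - (X : R⟦X⟧) ^ ((i + 1) * t)) =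
      ∏' i, (if ¬ s ∣ i + 1 ∧ ¬ t ∣ i + 1 then 1 else 1 - (X : R⟦X⟧) ^ (i + 1)) := by
  refine (tprod_congr fun i ↦ ?_).trans ((dilate_injective hst ht).tprod_eq fun m hm ↦ ?_)
  · by_cases hs : s ∣ i + 1 <;> simp [dilate_add_one ht, hs]
  · rw [Function.mem_mulSupport, ne_eq, ite_eq_left_iff, not_forall] at hm
    exact mem_range_dilate ht (not_and_or.1 hm.1 |>.imp not_not.1 not_not.1)

end Ring

end Nat.Partition

open Nat.Partition PowerSeries PowerSeries.WithPiTopology in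
theorem regular_distinct_eq_doubly_regular_general (s t : ℕ) (ht : 2 ≤ t)
    (hst : Nat.Coprime s t) (n : ℕ) :
    Nat.card {P : n.Partition // P.IsRegular s ∧ P.IsDistinct t} =
      Nat.card {P : n.Partition // P.IsRegular s ∧ P.IsRegular t} := by
  have ht₀ : 0 < t := by omega
  have hmul := ((hasProd_powerSeriesMk_card_regular_distinct_mul ℤ s ht₀).tprod_eq.symm.trans
    (tprod_one_sub_X_pow_reindex_of_coprime ℤ hst ht₀)).trans
      (hasProd_powerSeriesMk_card_doubly_regular_mul ℤ s t).tprod_eq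
  have h := congrArg (coeff n) (mul_right_cancel₀ (tprod_one_sub_X_pow_ne_zero ℤ) hmul)
  rwa [coeff_mk, coeff_mk, Nat.cast_inj] at h

/-- If `s` and `t` are coprime, the number of partitions of `n` simultaneously
`s`-regular and `t`-distinct equals the number of partitions of `n`
simultaneously `s`-regular and `t`-regular. -/
theorem regular_distinct_eq_doubly_regular (s t : ℕ) (hs : 2 ≤ s) (ht : 2 ≤ t)
    (hst : Nat.Coprime s t) (n : ℕ) :
    Nat.card {P : n.Partition // P.IsRegular s ∧ P.IsDistinct t} =
      Nat.card {P : n.Partition // P.IsRegular s ∧ P.IsRegular t} :=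
  regular_distinct_eq_doubly_regular_general s t ht hst n
end

section
/- For all integers s, t ≥ 2 and every natural number n, the number of partitions of n that are s-distinct and t-flat equals the number of partitions of n that are t-distinct and s-flat. -/
namespace DFS

variable {n : ℕ}

/-- number of parts of `P` strictly greater than `i`. -/
def cf (P : n.Partition) (i : ℕ) : ℕ := (P.parts.filter (fun a => i < a)).card

lemma cf_anti (P : n.Partition) {i j : ℕ} (h : i ≤ j) : cf P j ≤ cf P i := by
  apply Multiset.card_le_card
  apply Multiset.monotone_filter_right
  intro a ha; omega

lemma parts_le (P : n.Partition) {a : ℕ} (ha : a ∈ P.parts) : a ≤ n := by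
  have := Multiset.single_le_sum (fun x _ => Nat.zero_le x) a ha
  rwa [P.parts_sum] at this

lemma cf_eq_zero (P : n.Partition) {i : ℕ} (h : n ≤ i) : cf P i = 0 := by
  rw [cf, Multiset.card_eq_zero, Multiset.filter_eq_nil]
  intro a ha
  have := parts_le P ha
  omega

lemma lt_n_of_cf_pos (P : n.Partition) {i : ℕ} (h : 0 < cf P i) : i < n := by
  by_contra hc
  rw [cf_eq_zero P (by omega)] at h
  omega

lemma cf_le (P : n.Partition) (i : ℕ) : cf P i ≤ n := by
  have h1 : cf P i ≤ Multiset.card P.parts :=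
    Multiset.card_le_card (Multiset.filter_le _ _)
  have h2 : Multiset.card P.parts ≤ P.parts.sum := by
    have := Multiset.card_nsmul_le_sum (s := P.parts) (fun x hx => P.parts_pos hx)
    simpa using this
  rw [P.parts_sum] at h2
  omega

lemma cf_count (P : n.Partition) (a : ℕ) :
    cf P a = cf P (a + 1) + P.parts.count (a + 1) := by
  rw [cf, cf, Multiset.count_eq_card_filter_eq]
  have h := Multiset.filter_add_filter (fun x => a + 1 < x) (fun x => a + 1 = x) P.parts
  have h1 : Multiset.filter (fun x => a + 1 < x ∨ a + 1 = x) P.parts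
      = Multiset.filter (fun a_1 => a < a_1) P.parts := by
    apply Multiset.filter_congr
    intro x _; constructor <;> (intro; omega)
  have h2 : Multiset.filter (fun x => a + 1 < x ∧ a + 1 = x) P.parts = 0 := by
    rw [Multiset.filter_eq_nil]; intro x _ hx; omega
  rw [h1, h2] at h
  have := congrArg Multiset.card h
  simpa using this.symm

lemma count_zero_parts (P : n.Partition) : P.parts.count 0 = 0 := by
  rw [Multiset.count_eq_zero]
  intro h
  exact absurd (P.parts_pos h) (by omega)

lemma eq_of_cf (P Q : n.Partition) (h : ∀ i, cf P i = cf Q i) : P = Q := by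
  apply Nat.Partition.ext
  ext a
  cases a with
  | zero => rw [count_zero_parts, count_zero_parts]
  | succ b =>
    have hP := cf_count P b
    have hQ := cf_count Q b
    have h1 := h b
    have h2 := h (b + 1)
    omega

lemma sum_cf_aux (N : ℕ) (s : Multiset ℕ) (h : ∀ a ∈ s, 0 < a ∧ a ≤ N) :
    ∑ i ∈ Finset.range N, (s.filter (fun a => i < a)).card = s.sum := by
  induction s using Multiset.induction with
  | empty => simp
  | cons a s ih =>
    have ha := h a (Multiset.mem_cons_self a s)
    rw [Multiset.sum_cons, ← ih (fun x hx => h x (Multiset.mem_cons_of_mem hx))]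
    have hsplit : ∀ i : ℕ, ((a ::ₘ s).filter (fun x => i < x)).card
        = (if i < a then 1 else 0) + (s.filter (fun x => i < x)).card := by
      intro i
      rw [Multiset.filter_cons]
      split_ifs <;> simp [add_comm]
    simp only [hsplit]
    rw [Finset.sum_add_distrib]
    congr 1
    have hb : (∑ x ∈ Finset.range N, if x < a then 1 else 0 : ℕ)
        = ((Finset.range N).filter (fun x => x < a)).card := Finset.sum_boole _ _
    have hr : (Finset.range N).filter (fun x => x < a) = Finset.range a := by
      ext x
      simp only [Finset.mem_filter, Finset.mem_range]
      omega
    rw [hb, hr, Finset.card_range]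

lemma sum_filter_pos (s : Multiset ℕ) : (s.filter (fun v => 0 < v)).sum = s.sum := by
  conv_rhs => rw [← Multiset.filter_add_not (fun v => 0 < v) s]
  rw [Multiset.sum_add]
  have : (s.filter (fun v => ¬ 0 < v)).sum = 0 := by
    apply Multiset.sum_eq_zero
    intro x hx
    have := (Multiset.mem_filter.mp hx).2
    omega
  omega

/-- conjugate partition -/
def conj (P : n.Partition) : n.Partition where
  parts := ((Multiset.range n).map (cf P)).filter (fun v => 0 < v)
  parts_pos := fun hi => (Multiset.mem_filter.mp hi).2
  parts_sum := by
    rw [sum_filter_pos]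
    have h1 : ((Multiset.range n).map (cf P)).sum = ∑ i ∈ Finset.range n, cf P i := rfl
    rw [h1]
    have h2 := sum_cf_aux n P.parts (fun a ha => ⟨P.parts_pos ha, parts_le P ha⟩)
    rw [P.parts_sum] at h2
    exact h2

lemma mem_conj_iff (P : n.Partition) {v : ℕ} :
    v ∈ (conj P).parts ↔ 0 < v ∧ ∃ j < n, cf P j = v := by
  simp only [conj, Multiset.mem_filter, Multiset.mem_map, Multiset.mem_range]
  tauto

lemma cf_conj (P : n.Partition) (i : ℕ) :
    cf (conj P) i = ((Finset.range n).filter (fun j => i < cf P j)).card := by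
  have hp : (conj P).parts = ((Multiset.range n).map (cf P)).filter (fun v => 0 < v) := rfl
  rw [cf, hp, Multiset.filter_filter]
  have h1 : Multiset.filter (fun v => i < v ∧ 0 < v) ((Multiset.range n).map (cf P))
      = Multiset.filter (fun v => i < v) ((Multiset.range n).map (cf P)) := by
    apply Multiset.filter_congr
    intro x _; constructor
    · exact fun h => h.1
    · intro h; exact ⟨h, by omega⟩
  rw [h1, Multiset.filter_map, Multiset.card_map]
  rw [Finset.card_def, Finset.filter_val, Finset.range_val]
  rfl

lemma galois (P : n.Partition) (i j : ℕ) : j < cf (conj P) i ↔ i < cf P j := by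
  rcases lt_or_ge j n with hj | hj
  · rw [cf_conj]
    constructor
    · intro h
      by_contra hc
      have hsub : (Finset.range n).filter (fun k => i < cf P k) ⊆ Finset.range j := by
        intro k hk
        simp only [Finset.mem_filter, Finset.mem_range] at hk ⊢
        by_contra hkj
        have : cf P k ≤ cf P j := cf_anti P (by omega)
        omega
      have := Finset.card_le_card hsub
      simp only [Finset.card_range] at this
      omega
    · intro h
      have hsub : Finset.range (j + 1) ⊆ (Finset.range n).filter (fun k => i < cf P k) := by
        intro k hk
        simp only [Finset.mem_range] at hk
        simp only [Finset.mem_filter, Finset.mem_range]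
        have : cf P j ≤ cf P k := cf_anti P (by omega)
        constructor
        · omega
        · omega
      have := Finset.card_le_card hsub
      simp only [Finset.card_range] at this
      omega
  · constructor
    · intro h
      have := cf_le (conj P) i
      omega
    · intro h
      rw [cf_eq_zero P hj] at h
      omega

lemma conj_conj (P : n.Partition) : conj (conj P) = P := by
  apply eq_of_cf
  intro i
  rw [cf_conj]
  have h1 : (Finset.range n).filter (fun j => i < cf (conj P) j)
      = Finset.range (min (cf P i) n) := by
    ext j
    simp only [Finset.mem_filter, Finset.mem_range, Finset.mem_range, lt_min_iff]
    constructor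
    · intro ⟨hjn, hjc⟩
      exact ⟨(galois P j i).mp hjc, hjn⟩
    · intro ⟨hji, hjn⟩
      exact ⟨hjn, (galois P j i).mpr hji⟩
  rw [h1, Finset.card_range]
  have := cf_le P i
  omega

lemma distinct_iff_flat_conj (m : ℕ) (hm : 0 < m) (P : n.Partition) :
    P.IsDistinct m ↔ (conj P).IsFlat m := by
  constructor
  · intro hd v hv
    rcases (mem_conj_iff P).mp hv with ⟨hvpos, j, hjn, hjv⟩
    by_cases hvm : v < m
    · exact Or.inl hvm
    push_neg at hvm
    right
    have hex : ∃ k, cf P k < v := ⟨n, by rw [cf_eq_zero P le_rfl]; omega⟩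
    have hjslt : cf P (Nat.find hex) < v := Nat.find_spec hex
    have hjspos : Nat.find hex ≠ 0 := by
      intro h0
      have : v ≤ cf P 0 := by rw [← hjv]; exact cf_anti P (Nat.zero_le j)
      rw [h0] at hjslt; omega
    obtain ⟨j', hj'⟩ : ∃ j', Nat.find hex = j' + 1 := ⟨Nat.find hex - 1, by omega⟩
    rw [hj'] at hjslt
    have hj'ge : ¬ cf P j' < v := Nat.find_min hex (by omega)
    have hjlt : j < j' + 1 := by
      by_contra hc
      have : cf P j ≤ cf P (j' + 1) := cf_anti P (by omega)
      omega
    have hj'le : cf P j' ≤ v := by rw [← hjv]; exact cf_anti P (by omega)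
    have hj'eq : cf P j' = v := by omega
    set b := cf P (j' + 1) with hb
    have hcount := cf_count P j'
    have hcm := hd (j' + 1)
    have hbpos : 0 < b := by omega
    refine ⟨b, ?_, by omega, by omega⟩
    exact (mem_conj_iff P).mpr ⟨hbpos, j' + 1, lt_n_of_cf_pos P hbpos, rfl⟩
  · intro hf a
    cases a with
    | zero => rw [count_zero_parts]; omega
    | succ a =>
      have hcount := cf_count P a
      by_cases hz : cf P a = 0
      · omega
      have hvpos : 0 < cf P a := by omega
      have hmem : cf P a ∈ (conj P).parts :=
        (mem_conj_iff P).mpr ⟨hvpos, a, lt_n_of_cf_pos P hvpos, rfl⟩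
      rcases hf (cf P a) hmem with hlt | ⟨b, hb, hbv, hsub⟩
      · omega
      · rcases (mem_conj_iff P).mp hb with ⟨hbpos, j, hjn, hjb⟩
        have hja : a + 1 ≤ j := by
          by_contra hc
          have : cf P a ≤ cf P j := cf_anti P (by omega)
          omega
        have : cf P j ≤ cf P (a + 1) := cf_anti P hja
        omega

lemma flat_iff_distinct_conj (m : ℕ) (hm : 0 < m) (P : n.Partition) :
    P.IsFlat m ↔ (conj P).IsDistinct m := by
  rw [distinct_iff_flat_conj m hm (conj P), conj_conj]

end DFS

/-- The number of partitions of `n` that are `s`-distinct and `t`-flat equals the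
number of partitions of `n` that are `t`-distinct and `s`-flat (conjugation). -/
theorem distinct_flat_symm (s t : ℕ) (hs : 2 ≤ s) (ht : 2 ≤ t) (n : ℕ) :
    Nat.card {P : n.Partition // P.IsDistinct s ∧ P.IsFlat t} =
      Nat.card {P : n.Partition // P.IsDistinct t ∧ P.IsFlat s} := by
  apply Nat.card_congr
  have hs0 : 0 < s := by omega
  have ht0 : 0 < t := by omega
  refine ⟨fun P => ⟨DFS.conj P.1, ?_, ?_⟩, fun P => ⟨DFS.conj P.1, ?_, ?_⟩, ?_, ?_⟩
  · exact (DFS.flat_iff_distinct_conj t ht0 P.1).mp P.2.2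
  · exact (DFS.distinct_iff_flat_conj s hs0 P.1).mp P.2.1
  · exact (DFS.flat_iff_distinct_conj s hs0 P.1).mp P.2.2
  · exact (DFS.distinct_iff_flat_conj t ht0 P.1).mp P.2.1
  · intro P; exact Subtype.ext (DFS.conj_conj P.1)
  · intro P; exact Subtype.ext (DFS.conj_conj P.1)
end

section
/- A partition of n is simultaneously 2-regular, 2-distinct, and 3-flat if and only if its parts are the consecutive odd numbers 1, 3, 5, ..., 2k-1 for some k; hence the number of such partitions of n is 1 if n is a perfect square and 0 otherwise. -/
lemma sum_map_odds (k : ℕ) :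
    (Multiset.map (fun i => 2 * i + 1) (Multiset.range k)).sum = k ^ 2 := by
  induction k with
  | zero => simp
  | succ k ih =>
    rw [Multiset.range_succ, Multiset.map_cons, Multiset.sum_cons, ih]
    ring

lemma nodup_map_odds (k : ℕ) :
    (Multiset.map (fun i => 2 * i + 1) (Multiset.range k)).Nodup :=
  (Multiset.nodup_range _).map (fun a b h => by omega)

open scoped Classical in
/-- A partition of `n` is simultaneously 2-regular, 2-distinct, and 3-flat iff
its parts are the consecutive odd numbers `1, 3, …, 2k-1` for some `k`; hence the
number of such partitions of `n` is 1 if `n` is a perfect square and 0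
otherwise. -/
theorem regular_distinct_flat_223_squares (n : ℕ) :
    (∀ P : n.Partition,
        (P.IsRegular 2 ∧ P.IsDistinct 2 ∧ P.IsFlat 3) ↔
          ∃ k, P.parts = Multiset.map (fun i => 2 * i + 1) (Multiset.range k)) ∧
      Nat.card {P : n.Partition // P.IsRegular 2 ∧ P.IsDistinct 2 ∧ P.IsFlat 3} =
        if ∃ k, n = k ^ 2 then 1 else 0 := by
  have hiff : ∀ P : n.Partition,
      (P.IsRegular 2 ∧ P.IsDistinct 2 ∧ P.IsFlat 3) ↔
        ∃ k, P.parts = Multiset.map (fun i => 2 * i + 1) (Multiset.range k) := by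
    intro P
    constructor
    · rintro ⟨hreg, hdis, hflat⟩
      have hnd : P.parts.Nodup :=
        Multiset.nodup_iff_count_le_one.2 fun a => Nat.lt_succ_iff.1 (hdis a)
      have hodd : ∀ a ∈ P.parts, a % 2 = 1 := by
        intro a ha
        have := hreg a ha
        omega
      have hstep : ∀ a ∈ P.parts, 3 ≤ a → a - 2 ∈ P.parts := by
        intro a ha h3
        rcases hflat a ha with h | ⟨b, hb, hba, hab⟩
        · omega
        · have h1 := hodd a ha
          have h2 := hodd b hb
          have hb2 : b = a - 2 := by omega
          rwa [← hb2]
      by_cases hP : P.parts = 0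
      · exact ⟨0, by simp [hP]⟩
      · obtain ⟨x, hx⟩ := Multiset.exists_mem_of_ne_zero hP
        have hne : P.parts.toFinset.Nonempty := ⟨x, Multiset.mem_toFinset.2 hx⟩
        set m := P.parts.toFinset.max' hne with hm
        have hmmem : m ∈ P.parts := Multiset.mem_toFinset.1 (P.parts.toFinset.max'_mem hne)
        have hle : ∀ a ∈ P.parts, a ≤ m := fun a ha =>
          P.parts.toFinset.le_max' a (Multiset.mem_toFinset.2 ha)
        have hmodd := hodd m hmmem
        obtain ⟨t, ht⟩ : ∃ t, m = 2 * t + 1 := ⟨m / 2, by omega⟩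
        have hall : ∀ j, j ≤ t → 2 * (t - j) + 1 ∈ P.parts := by
          intro j
          induction j with
          | zero => intro _; simpa [Nat.sub_zero, ← ht] using hmmem
          | succ j ih =>
            intro hj
            have h1 : 2 * (t - j) + 1 ∈ P.parts := ih (by omega)
            have h2 := hstep _ h1 (by omega)
            have he : 2 * (t - j) + 1 - 2 = 2 * (t - (j + 1)) + 1 := by omega
            rwa [he] at h2
        refine ⟨t + 1, ((Multiset.Nodup.ext hnd (nodup_map_odds (t + 1))).2 fun a => ?_)⟩
        simp only [Multiset.mem_map, Multiset.mem_range]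
        constructor
        · intro ha
          have h1 := hodd a ha
          have h2 := hle a ha
          exact ⟨a / 2, by omega, by omega⟩
        · rintro ⟨i, hi, rfl⟩
          have := hall (t - i) (by omega)
          have he : t - (t - i) = i := by omega
          rwa [he] at this
    · rintro ⟨k, hk⟩
      refine ⟨?_, ?_, ?_⟩
      · intro a ha
        rw [hk] at ha
        simp only [Multiset.mem_map, Multiset.mem_range] at ha
        obtain ⟨i, _, rfl⟩ := ha
        omega
      · intro a
        have : P.parts.Nodup := hk ▸ nodup_map_odds k
        have := Multiset.nodup_iff_count_le_one.1 this a
        omega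
      · intro a ha
        rw [hk] at ha
        simp only [Multiset.mem_map, Multiset.mem_range] at ha
        obtain ⟨i, hi, rfl⟩ := ha
        rcases Nat.eq_zero_or_pos i with h0 | h0
        · left; omega
        · right
          refine ⟨2 * (i - 1) + 1, ?_, by omega, by omega⟩
          rw [hk]
          simp only [Multiset.mem_map, Multiset.mem_range]
          exact ⟨i - 1, by omega, rfl⟩
  refine ⟨hiff, ?_⟩
  split_ifs with h
  · obtain ⟨k, rfl⟩ := h
    rw [Nat.card_eq_one_iff_unique]
    constructor
    · constructor
      rintro ⟨P, hP⟩ ⟨Q, hQ⟩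
      obtain ⟨k1, h1⟩ := (hiff P).1 hP
      obtain ⟨k2, h2⟩ := (hiff Q).1 hQ
      have s1 : k1 ^ 2 = k ^ 2 := by rw [← sum_map_odds k1, ← h1, P.parts_sum]
      have s2 : k2 ^ 2 = k ^ 2 := by rw [← sum_map_odds k2, ← h2, Q.parts_sum]
      have e1 : k1 = k2 := Nat.pow_left_injective (by norm_num) (s1.trans s2.symm)
      have : P = Q := Nat.Partition.ext (by rw [h1, h2, e1])
      exact Subtype.ext this
    · refine ⟨⟨⟨Multiset.map (fun i => 2 * i + 1) (Multiset.range k), ?_, sum_map_odds k⟩,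
        (hiff _).2 ⟨k, rfl⟩⟩⟩
      intro i hi
      simp only [Multiset.mem_map, Multiset.mem_range] at hi
      obtain ⟨j, _, rfl⟩ := hi
      omega
  · have : IsEmpty {P : n.Partition // P.IsRegular 2 ∧ P.IsDistinct 2 ∧ P.IsFlat 3} := by
      refine ⟨?_⟩
      rintro ⟨P, hP⟩
      obtain ⟨k, hk⟩ := (hiff P).1 hP
      exact h ⟨k, by rw [← P.parts_sum, hk, sum_map_odds]⟩
    simp [Nat.card_of_isEmpty]
end

section
/- For all n > 0, the number of 2-regular 3-flat partitions of n equals the number of 2-regular 4-flat partitions of n-1. -/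
lemma one_mem_parts_aux {n : ℕ} (hn : 0 < n) (P : n.Partition)
    (hr : P.IsRegular 2) (hf : P.IsFlat 3) : 1 ∈ P.parts := by
  have hne : P.parts ≠ 0 := by
    intro h
    have := P.parts_sum
    rw [h] at this
    simp at this
    omega
  have hne' : P.parts.toFinset.Nonempty := by
    simp [Multiset.toFinset_nonempty]
    exact hne
  set m := P.parts.toFinset.min' hne' with hm_def
  have hm : m ∈ P.parts := by
    have := P.parts.toFinset.min'_mem hne'
    simpa using this
  rcases hf m hm with h3 | ⟨b, hb, hba, _⟩
  · have hpos := P.parts_pos hm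
    have hodd := hr m hm
    have : m = 1 := by omega
    rwa [this] at hm
  · have : m ≤ b := P.parts.toFinset.min'_le b (by simpa using hb)
    omega

/-- For `n > 0`, the number of 2-regular 3-flat partitions of `n` equals the
number of 2-regular 4-flat partitions of `n - 1`. -/
theorem regular_flat_23_24 (n : ℕ) (hn : 0 < n) :
    Nat.card {P : n.Partition // P.IsRegular 2 ∧ P.IsFlat 3} =
      Nat.card {P : (n - 1).Partition // P.IsRegular 2 ∧ P.IsFlat 4} := by
  apply Nat.card_congr
  refine
    { toFun := fun ⟨P, hr, hf⟩ =>
        ⟨⟨P.parts.erase 1,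
          fun h => P.parts_pos (Multiset.mem_of_mem_erase h),
          ?_⟩, ?_, ?_⟩
      invFun := fun ⟨Q, hr, hf⟩ =>
        ⟨⟨1 ::ₘ Q.parts,
          fun {a} h => by
            rcases Multiset.mem_cons.mp h with h | h
            · omega
            · exact Q.parts_pos h,
          ?_⟩, ?_, ?_⟩
      left_inv := ?_
      right_inv := ?_ }
  · -- sum of erased
    have h1 : 1 ∈ P.parts := one_mem_parts_aux hn P hr hf
    have hc := Multiset.cons_erase h1
    have : (1 ::ₘ P.parts.erase 1).sum = n := by rw [hc, P.parts_sum]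
    rw [Multiset.sum_cons] at this
    omega
  · -- regular
    intro a ha
    exact hr a (Multiset.mem_of_mem_erase ha)
  · -- 4-flat
    intro a ha
    have haP := Multiset.mem_of_mem_erase ha
    rcases hf a haP with h3 | ⟨b, hb, hba, hlt⟩
    · left; omega
    · have hoa := hr a haP
      have hob := hr b hb
      have hbpos := P.parts_pos hb
      have : a - b = 2 := by omega
      by_cases hb1 : b = 1
      · left; omega
      · right
        exact ⟨b, (Multiset.mem_erase_of_ne hb1).mpr hb, hba, by omega⟩
  · -- sum of cons
    rw [Multiset.sum_cons, Q.parts_sum]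
    omega
  · -- regular
    intro a ha
    rcases Multiset.mem_cons.mp ha with h | h
    · omega
    · exact hr a h
  · -- 3-flat
    intro a ha
    rcases Multiset.mem_cons.mp ha with h | h
    · left; omega
    · have hoa := hr a h
      have hapos := Q.parts_pos h
      rcases hf a h with h4 | ⟨b, hb, hba, hlt⟩
      · -- a < 4, odd, pos: a = 1 or a = 3
        by_cases h1 : a = 1
        · left; omega
        · right
          exact ⟨1, Multiset.mem_cons_self 1 _, by omega, by omega⟩
      · have hob := hr b hb
        have hbpos := Q.parts_pos hb
        right
        exact ⟨b, Multiset.mem_cons_of_mem hb, hba, by omega⟩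
  · -- left_inv
    rintro ⟨P, hr, hf⟩
    have h1 : 1 ∈ P.parts := one_mem_parts_aux hn P hr hf
    apply Subtype.ext
    apply Nat.Partition.ext
    simp [Multiset.cons_erase h1]
  · -- right_inv
    rintro ⟨Q, hr, hf⟩
    apply Subtype.ext
    apply Nat.Partition.ext
    simp
end

section
/- The generating function for s-distinct 2-flat partitions is ∑_{k≥0} q^{k(k+1)/2} · (q^{s-1};q^{s-1})_k / (q;q)_k, i.e., the number of partitions of n in which every part from 1 up to some k appears at least once and at most s-1 times equals the coefficient of q^n in this sum. -/
open PowerSeries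

/-!
A 2-flat partition has exactly the parts `1, …, k`, where `k` is its number of distinct parts, and
it is `s`-distinct iff every multiplicity lies in `[1, s)`. Such partitions with `k` distinct parts
are therefore counted by `∏_{i=1}^k (q^i + q^{2i} + ⋯ + q^{(s-1)i})`, and the `i`-th factor is
`q^i (1 - q^{(s-1)i}) / (1 - q^i)`, which multiplies out to the `k`-th summand.
-/

open Finset

theorem mul_one_sub_pow_eq_one_sub_mul_sum_Ico {R : Type*} [CommRing R] (y : R) (t : ℕ) :
    y * (1 - y ^ t) = (1 - y) * ∑ j ∈ Ico 1 (t + 1), y ^ j := by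
  linear_combination geom_sum_Ico_mul y (Nat.le_add_left 1 t)

theorem Finset.sum_range_add_one (k : ℕ) : ∑ i ∈ range k, (i + 1) = k * (k + 1) / 2 := by
  rw [← add_zero (∑ i ∈ range k, (i + 1)), ← sum_range_succ' (fun i => i), sum_range_id,
    Nat.add_sub_cancel, mul_comm]

theorem PowerSeries.X_pow_mul_prod_one_sub_mul_inv_eq_prod_sum {K : Type*} [Field K] (t k : ℕ) :
    (X : K⟦X⟧) ^ (k * (k + 1) / 2) * (∏ i ∈ range k, (1 - X ^ (t * (i + 1)))) *
        (∏ i ∈ range k, (1 - (X : K⟦X⟧) ^ (i + 1)))⁻¹ =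
      ∏ i ∈ range k, ∑ j ∈ Ico 1 (t + 1), (X : K⟦X⟧) ^ ((i + 1) * j) := by
  have hunit : constantCoeff (∏ i ∈ range k, (1 - (X : K⟦X⟧) ^ (i + 1))) ≠ 0 := by
    simp [map_prod]
  rw [eq_comm, eq_mul_inv_iff_mul_eq hunit, ← sum_range_add_one, ← prod_pow_eq_pow_sum,
    ← prod_mul_distrib, ← prod_mul_distrib]
  refine prod_congr rfl fun i _ => ?_
  rw [mul_comm t, pow_mul, mul_one_sub_pow_eq_one_sub_mul_sum_Ico, mul_comm]
  simp_rw [pow_mul]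

theorem PowerSeries.coeff_prod_sum_X_pow {ι R : Type*} [Fintype ι] [DecidableEq ι]
    [CommSemiring R] (t : ι → Finset ℕ) (e : ι → ℕ → ℕ) (n : ℕ) :
    coeff n (∏ i, ∑ j ∈ t i, (X : R⟦X⟧) ^ e i j) =
      #{c ∈ Fintype.piFinset t | ∑ i, e i (c i) = n} := by
  simp_rw [prod_univ_sum, prod_pow_eq_pow_sum, map_sum, coeff_X_pow, sum_boole, eq_comm]

theorem Finset.eq_Icc_one_sup_of_pred_mem {S : Finset ℕ} (h0 : 0 ∉ S)
    (hpred : ∀ a ∈ S, 2 ≤ a → a - 1 ∈ S) : S = Icc 1 (S.sup id) := by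
  have down : ∀ d, ∀ b ∈ S, d < b → b - d ∈ S := by
    intro d
    induction d with
    | zero => exact fun b hb _ => hb
    | succ d ih =>
      intro b hb hdb
      simpa [Nat.sub_sub] using hpred _ (ih b hb (by omega)) (by omega)
  ext a
  rw [mem_Icc]
  constructor
  · intro ha
    exact ⟨Nat.pos_of_ne_zero (ne_of_mem_of_not_mem ha h0), le_sup (f := id) ha⟩
  · rintro ⟨ha1, hak⟩
    obtain ⟨b, hb, hab⟩ := (Finset.le_sup_iff (show ⊥ < a from ha1)).1 hak
    change a ≤ b at hab
    simpa [Nat.sub_sub_self hab] using down (b - a) b hb (by omega)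

theorem Finset.exists_fin_val_add_one_eq_of_mem_Icc {k a : ℕ} (ha : a ∈ Icc 1 k) :
    ∃ i : Fin k, (i : ℕ) + 1 = a :=
  ⟨⟨a - 1, by grind⟩, by grind⟩

namespace Multiset

def ofMultiplicities {k : ℕ} (m : Fin k → ℕ) : Multiset ℕ :=
  ∑ i, replicate (m i) (i + 1)

variable {k : ℕ} (m : Fin k → ℕ)

theorem count_ofMultiplicities_succ (i : Fin k) :
    count ((i : ℕ) + 1) (ofMultiplicities m) = m i := by
  simp [ofMultiplicities, count_sum', count_replicate, Fin.val_inj]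

theorem mem_Icc_of_mem_ofMultiplicities {a : ℕ} (ha : a ∈ ofMultiplicities m) :
    a ∈ Finset.Icc 1 k := by
  obtain ⟨i, -, hi⟩ := mem_sum.1 ha
  rw [eq_of_mem_replicate hi, Finset.mem_Icc]
  omega

theorem toFinset_ofMultiplicities (hm : ∀ i, 0 < m i) :
    (ofMultiplicities m).toFinset = Finset.Icc 1 k := by
  ext a
  refine ⟨mem_Icc_of_mem_ofMultiplicities m ∘ mem_toFinset.1, fun ha => ?_⟩
  obtain ⟨i, rfl⟩ := Finset.exists_fin_val_add_one_eq_of_mem_Icc ha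
  rw [mem_toFinset, ← count_pos, count_ofMultiplicities_succ]
  exact hm i

theorem count_ofMultiplicities_lt {s : ℕ} (hs : 0 < s) (hm : ∀ i, m i < s) (a : ℕ) :
    count a (ofMultiplicities m) < s := by
  by_cases ha : a ∈ Finset.Icc 1 k
  · obtain ⟨i, rfl⟩ := Finset.exists_fin_val_add_one_eq_of_mem_Icc ha
    rw [count_ofMultiplicities_succ]
    exact hm i
  · rwa [count_eq_zero.2 (ha ∘ mem_Icc_of_mem_ofMultiplicities m)]

theorem sum_ofMultiplicities : (ofMultiplicities m).sum = ∑ i, (i + 1) * m i := by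
  simp [ofMultiplicities, Multiset.sum_sum, mul_comm]

theorem eq_ofMultiplicities_count {M : Multiset ℕ} (hM : M.toFinset ⊆ Finset.Icc 1 k) :
    M = ofMultiplicities fun i : Fin k => M.count ((i : ℕ) + 1) := by
  refine Multiset.ext.2 fun a => ?_
  by_cases ha : a ∈ Finset.Icc 1 k
  · obtain ⟨i, rfl⟩ := Finset.exists_fin_val_add_one_eq_of_mem_Icc ha
    rw [count_ofMultiplicities_succ]
  · rw [count_eq_zero.2 (ha ∘ mem_Icc_of_mem_ofMultiplicities _), count_eq_zero,
      ← mem_toFinset]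
    exact ha ∘ (hM ·)

end Multiset

namespace Nat.Partition

variable {n : ℕ}

theorem isFlat_two_iff_pred_mem (P : n.Partition) :
    P.IsFlat 2 ↔ ∀ a ∈ P.parts, 2 ≤ a → a - 1 ∈ P.parts := by
  refine forall₂_congr fun a _ => ⟨?_, fun h => ?_⟩
  · rintro (ha | ⟨b, hb, hba, hab⟩) h2
    · omega
    · rwa [show a - 1 = b by omega]
  · by_cases ha : a < 2
    · exact .inl ha
    · exact .inr ⟨a - 1, h (by omega), by omega, by omega⟩

theorem isFlat_two_iff (P : n.Partition) :
    P.IsFlat 2 ↔ P.parts.toFinset = Icc 1 #P.parts.toFinset := by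
  rw [isFlat_two_iff_pred_mem]
  constructor
  · intro h
    have hS := Finset.eq_Icc_one_sup_of_pred_mem (S := P.parts.toFinset)
      (by simpa using fun h0 => (P.parts_pos h0).ne rfl) (by simpa using h)
    rw [hS, Nat.card_Icc, Nat.add_sub_cancel]
  · intro h a ha h2
    rw [← Multiset.mem_toFinset, h, mem_Icc] at ha ⊢
    omega

theorem card_toFinset_parts_le (P : n.Partition) : #P.parts.toFinset ≤ n :=
  (Multiset.toFinset_card_le _).trans <| by
    simpa [P.parts_sum] using Multiset.card_nsmul_le_sum fun _ h => P.parts_pos h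

open scoped Classical in
theorem card_isDistinct_toFinset_parts_eq_Icc {s : ℕ} (hs : 0 < s) (k : ℕ) :
    #{P : n.Partition | P.IsDistinct s ∧ P.parts.toFinset = Icc 1 k} =
      #{m ∈ Fintype.piFinset fun _ : Fin k => Ico 1 s |
        ∑ i : Fin k, ((i : ℕ) + 1) * m i = n} := by
  refine card_bij' (fun P _ i => P.parts.count ((i : ℕ) + 1))
    (fun m hm => ⟨Multiset.ofMultiplicities m,
      fun ha => (mem_Icc.1 (Multiset.mem_Icc_of_mem_ofMultiplicities m ha)).1,
      (Multiset.sum_ofMultiplicities m).trans (mem_filter.1 hm).2⟩) ?_ ?_ ?_ ?_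
  · intro P hP
    obtain ⟨hdist, hP⟩ := (mem_filter.1 hP).2
    simp only [mem_filter, Fintype.mem_piFinset, mem_Ico]
    refine ⟨fun i => ⟨Multiset.count_pos.2 ?_, hdist _⟩, ?_⟩
    · rw [← Multiset.mem_toFinset, hP, mem_Icc]
      omega
    · rw [← Multiset.sum_ofMultiplicities, ← Multiset.eq_ofMultiplicities_count hP.subset,
        P.parts_sum]
  · intro m hm
    simp only [mem_filter, Fintype.mem_piFinset, mem_Ico] at hm
    simp only [mem_filter, mem_univ, true_and]
    exact ⟨Multiset.count_ofMultiplicities_lt m hs (fun i => (hm.1 i).2),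
      Multiset.toFinset_ofMultiplicities m fun i => (hm.1 i).1⟩
  · intro P hP
    exact Nat.Partition.ext (Multiset.eq_ofMultiplicities_count (mem_filter.1 hP).2.2.subset).symm
  · intro m _
    funext i
    exact Multiset.count_ofMultiplicities_succ m i

open scoped Classical in
theorem card_isDistinct_isFlat_two (s : ℕ) :
    Nat.card {P : n.Partition // P.IsDistinct s ∧ P.IsFlat 2} =
      ∑ k ∈ range (n + 1),
        #{P : n.Partition | P.IsDistinct s ∧ P.parts.toFinset = Icc 1 k} := by
  rw [Nat.card_eq_fintype_card, Fintype.card_subtype,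
    card_eq_sum_card_fiberwise fun P _ => mem_range_succ_iff.2 P.card_toFinset_parts_le]
  refine sum_congr rfl fun k _ => congrArg card (filter_filter .. |>.trans (filter_congr ?_))
  intro P _
  rw [and_assoc, isFlat_two_iff]
  refine and_congr_right fun _ => ⟨fun ⟨h, hk⟩ => hk ▸ h, fun h => ?_⟩
  rw [h, Nat.card_Icc, Nat.add_sub_cancel]
  exact ⟨rfl, rfl⟩

end Nat.Partition

/-- The generating function for `s`-distinct 2-flat partitions is
`∑_{k ≥ 0} q^{k(k+1)/2} (q^{s-1}; q^{s-1})_k / (q; q)_k`: the number of such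
partitions of `n` is the coefficient of `q^n` in this sum.  (The term indexed by
`k` is `O(q^{k(k+1)/2})`, so terms with `k > n` do not contribute to the
coefficient of `q^n` and the sum may be truncated at `k = n`.) -/
theorem distinct_flat_s2_genfun (s : ℕ) (hs : 2 ≤ s) (n : ℕ) :
    (Nat.card {P : n.Partition // P.IsDistinct s ∧ P.IsFlat 2} : ℚ) =
      PowerSeries.coeff n
        (∑ k ∈ Finset.range (n + 1),
          (X : PowerSeries ℚ) ^ (k * (k + 1) / 2) *
            (∏ i ∈ Finset.range k, (1 - (X : PowerSeries ℚ) ^ ((s - 1) * (i + 1)))) *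
            (∏ i ∈ Finset.range k, (1 - (X : PowerSeries ℚ) ^ (i + 1)))⁻¹) := by
  obtain ⟨t, rfl⟩ : ∃ t, s = t + 1 := ⟨s - 1, by omega⟩
  rw [Nat.add_sub_cancel, Nat.Partition.card_isDistinct_isFlat_two, map_sum, Nat.cast_sum]
  refine sum_congr rfl fun k _ => ?_
  rw [X_pow_mul_prod_one_sub_mul_inv_eq_prod_sum,
    prod_range (fun i => ∑ j ∈ Ico 1 (t + 1), X ^ ((i + 1) * j)),
    coeff_prod_sum_X_pow, Nat.Partition.card_isDistinct_toFinset_parts_eq_Icc (Nat.succ_pos t)]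
end
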